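/- arXiv:1707.07424 — 3 statements merged into one kernel-verified Lean document; each statement's English description precedes it below -/
import Mathlib

section
/- Let α, β be real numbers with 0 ≤ α ≤ β and let f : [0,1] → ℝ be continuous. Then sup_{x ∈ [0,1]} |B_n^{α,β}(f;x) − B_n(f;x)| → 0 as n → ∞; that is, for every ε > 0 there exists N such that for all n ≥ N and all x ∈ [0,1], |B_n^{α,β}(f;x) − B_n(f;x)| ≤ ε. -/
/-- Bernstein basis polynomial `b_{n,k}(x) = (n choose k) x^k (1-x)^(n-k)`. -/
noncomputable def bernsteinBasis (n k : ℕ) (x : ℝ) : ℝ :=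
  (n.choose k : ℝ) * x ^ k * (1 - x) ^ (n - k)

/-- Bernstein-Stancu operator `B_n^{α,β}(f;x)`; for `α = β = 0` it is the Bernstein operator. -/
noncomputable def bernsteinStancu (n : ℕ) (α β : ℝ) (f : ℝ → ℝ) (x : ℝ) : ℝ :=
  ∑ k ∈ Finset.range (n + 1), bernsteinBasis n k x * f (((k : ℝ) + α) / ((n : ℝ) + β))

/-!
The Stancu node `(k + α)/(n + β)` lies in `[0, 1]` and within `β/n` of the Bernstein node `k/n`.
Since the Bernstein basis is a partition of unity on `[0, 1]`, the difference of the two operators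
is bounded by the oscillation of `f` over distances `β/n`, which tends to `0` by uniform continuity
of `f` on `[0, 1]`.
-/

open Finset

lemma bernsteinBasis_nonneg (n k : ℕ) {x : ℝ} (hx : x ∈ Set.Icc (0 : ℝ) 1) :
    0 ≤ bernsteinBasis n k x := by
  have : 0 ≤ 1 - x := sub_nonneg.mpr hx.2
  have := hx.1
  unfold bernsteinBasis
  positivity

lemma sum_bernsteinBasis (n : ℕ) (x : ℝ) :
    ∑ k ∈ range (n + 1), bernsteinBasis n k x = 1 := by
  have h := add_pow x (1 - x) n
  rw [add_sub_cancel, one_pow] at h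
  rw [h]
  exact sum_congr rfl fun k _ => by unfold bernsteinBasis; ring

lemma abs_sum_bernsteinBasis_mul_le {n : ℕ} {x ε : ℝ} (hx : x ∈ Set.Icc (0 : ℝ) 1)
    {g : ℕ → ℝ} (hg : ∀ k ≤ n, |g k| ≤ ε) :
    |∑ k ∈ range (n + 1), bernsteinBasis n k x * g k| ≤ ε :=
  calc |∑ k ∈ range (n + 1), bernsteinBasis n k x * g k|
      ≤ ∑ k ∈ range (n + 1), |bernsteinBasis n k x * g k| := abs_sum_le_sum_abs _ _
    _ ≤ ∑ k ∈ range (n + 1), bernsteinBasis n k x * ε := by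
        refine sum_le_sum fun k hk => ?_
        rw [abs_mul, abs_of_nonneg (bernsteinBasis_nonneg n k hx)]
        exact mul_le_mul_of_nonneg_left (hg k (Nat.lt_succ_iff.mp (mem_range.mp hk)))
          (bernsteinBasis_nonneg n k hx)
    _ = ε := by rw [← sum_mul, sum_bernsteinBasis, one_mul]

lemma stancu_node_mem_Icc {k n : ℕ} (hk : k ≤ n) {α β : ℝ} (hα : 0 ≤ α) (hαβ : α ≤ β) :
    ((k : ℝ) + α) / ((n : ℝ) + β) ∈ Set.Icc (0 : ℝ) 1 := by
  have hkn : (k : ℝ) ≤ n := by exact_mod_cast hk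
  have hβ : 0 ≤ β := hα.trans hαβ
  exact ⟨by positivity, div_le_one_of_le₀ (by linarith) (by positivity)⟩

lemma abs_stancu_node_sub_le {k n : ℕ} (hk : k ≤ n) (hn : 0 < n) {α β : ℝ} (hα : 0 ≤ α)
    (hαβ : α ≤ β) :
    |((k : ℝ) + α) / ((n : ℝ) + β) - k / n| ≤ β / n := by
  have hkn : (k : ℝ) ≤ n := by exact_mod_cast hk
  have hn' : (0 : ℝ) < n := by exact_mod_cast hn
  have hβ : 0 ≤ β := hα.trans hαβ
  have hnβ : 0 < (n : ℝ) * (n + β) := by positivity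
  have hdiff : ((k : ℝ) + α) / (n + β) - k / n = (n * α - k * β) / (n * (n + β)) := by
    field_simp
    ring
  have hnum : |(n : ℝ) * α - k * β| ≤ n * β :=
    abs_le.mpr ⟨by nlinarith [(Nat.cast_nonneg k : (0 : ℝ) ≤ k)], by nlinarith⟩
  calc |((k : ℝ) + α) / (n + β) - k / n|
      = |(n : ℝ) * α - k * β| / (n * (n + β)) := by rw [hdiff, abs_div, abs_of_pos hnβ]
    _ ≤ n * β / (n * (n + β)) := by gcongr
    _ = β / (n + β) := by rw [mul_div_mul_left _ _ hn'.ne']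
    _ ≤ β / n := div_le_div_of_nonneg_left hβ hn' (le_add_of_nonneg_right hβ)

theorem stancu_sub_bernstein_tendsto_zero_uniformly (α β : ℝ) (hα : 0 ≤ α) (hαβ : α ≤ β)
    (f : ℝ → ℝ) (hf : ContinuousOn f (Set.Icc 0 1)) :
    ∀ ε > (0 : ℝ), ∃ N : ℕ, ∀ n : ℕ, N ≤ n → ∀ x ∈ Set.Icc (0 : ℝ) 1,
      |bernsteinStancu n α β f x - bernsteinStancu n 0 0 f x| ≤ ε := by
  intro ε hε
  obtain ⟨δ, hδ, hfδ⟩ := Metric.uniformContinuousOn_iff.mp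
    (isCompact_Icc.uniformContinuousOn_of_continuous hf) ε hε
  obtain ⟨N, hN⟩ := exists_nat_gt (β / δ)
  refine ⟨N, fun n hNn x hx => ?_⟩
  have hβδ : β / δ < n := hN.trans_le (by exact_mod_cast hNn)
  have hn : 0 < n := by
    have : 0 ≤ β / δ := div_nonneg (hα.trans hαβ) hδ.le
    exact_mod_cast this.trans_lt hβδ
  have hβn : β / n < δ := (div_lt_iff₀ (by exact_mod_cast hn)).mpr ((div_lt_iff₀' hδ).mp hβδ)
  unfold bernsteinStancu
  rw [← sum_sub_distrib]
  simp_rw [← mul_sub]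
  refine abs_sum_bernsteinBasis_mul_le hx fun k hk =>
    (hfδ _ (stancu_node_mem_Icc hk hα hαβ) _ (stancu_node_mem_Icc hk le_rfl le_rfl) ?_).le
  rw [Real.dist_eq, add_zero, add_zero]
  exact (abs_stancu_node_sub_le hk hn hα hαβ).trans_lt hβn
end

section
/- Let α, β be real numbers with 0 ≤ α ≤ β and let f : [0,1] → ℝ be continuous. There exists a constant c > 0 (depending only on α and β) such that for every natural number n ≥ 1 and every x ∈ [0,1], |B_n^{α,β}(f;x) − f(x)| ≤ c · ω(f; n^{−1/2}), where ω(f; δ) = sup{ |f(x₁) − f(x₂)| : x₁, x₂ ∈ [0,1], |x₁ − x₂| ≤ δ } is the modulus of continuity of f. -/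
/-- Modulus of continuity of `f` on `[0,1]`:
`ω(f;δ) = sup { |f x₁ - f x₂| : x₁, x₂ ∈ [0,1], |x₁ - x₂| ≤ δ }`. -/
noncomputable def modulusOfContinuity (f : ℝ → ℝ) (δ : ℝ) : ℝ :=
  sSup {d : ℝ | ∃ x₁ ∈ Set.Icc (0 : ℝ) 1, ∃ x₂ ∈ Set.Icc (0 : ℝ) 1,
    |x₁ - x₂| ≤ δ ∧ d = |f x₁ - f x₂|}

/-!
The operator is positive and reproduces constants, so `|B f x - f x| ≤ B(|f t - f x|; x)`.
Cutting `[x, t]` into steps of length `δ` gives `|f t - f x| ≤ (1 + (t - x)² / δ²) ω(f; δ)`,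
hence `|B f x - f x| ≤ (1 + B((t - x)²; x) / δ²) ω(f; δ)`. The Bernstein moments give
`(n + β)² B((t - x)²; x) = n x (1 - x) + (α - β x)²`, so for `δ = n^{-1/2}` the factor is at
most `5/4 + β²`.
-/

open Finset

lemma bernsteinBasis_eq_eval (n k : ℕ) (x : ℝ) :
    bernsteinBasis n k x = (bernsteinPolynomial ℝ n k).eval x := by
  simp [bernsteinBasis, bernsteinPolynomial]

lemma sum_bernsteinBasis_mul_natCast (n : ℕ) (x : ℝ) :
    ∑ k ∈ range (n + 1), bernsteinBasis n k x * k = n * x := by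
  simpa [bernsteinBasis_eq_eval, Polynomial.eval_finsetSum, mul_comm] using
    congrArg (Polynomial.eval x) (bernsteinPolynomial.sum_smul ℝ n)

lemma sum_bernsteinBasis_mul_sq_sub (n : ℕ) (x : ℝ) :
    ∑ k ∈ range (n + 1), bernsteinBasis n k x * ((k : ℝ) - n * x) ^ 2 = n * x * (1 - x) := by
  have := congrArg (Polynomial.eval x) (bernsteinPolynomial.variance ℝ n)
  simp only [Polynomial.eval_finsetSum, Polynomial.eval_mul, Polynomial.eval_pow,
    Polynomial.eval_sub, Polynomial.eval_natCast, Polynomial.eval_X,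
    Polynomial.eval_one, nsmul_eq_mul, ← bernsteinBasis_eq_eval] at this
  rw [← this]
  refine sum_congr rfl fun k _ => ?_
  ring

lemma sum_bernsteinBasis_mul_sq_sub_add (n : ℕ) (x c : ℝ) :
    ∑ k ∈ range (n + 1), bernsteinBasis n k x * ((k : ℝ) - n * x + c) ^ 2
      = n * x * (1 - x) + c ^ 2 := by
  have expand : ∀ k : ℕ, bernsteinBasis n k x * ((k : ℝ) - n * x + c) ^ 2
      = bernsteinBasis n k x * ((k : ℝ) - n * x) ^ 2 + 2 * c * (bernsteinBasis n k x * k)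
        + (c ^ 2 - 2 * c * n * x) * bernsteinBasis n k x := fun k => by ring
  simp only [expand, sum_add_distrib, ← mul_sum, sum_bernsteinBasis_mul_sq_sub,
    sum_bernsteinBasis_mul_natCast, sum_bernsteinBasis]
  ring

lemma stancuNode_mem_Icc {n k : ℕ} (hk : k ≤ n) {α β : ℝ} (hα : 0 ≤ α) (hαβ : α ≤ β) :
    ((k : ℝ) + α) / ((n : ℝ) + β) ∈ Set.Icc (0 : ℝ) 1 := by
  have hkn : (k : ℝ) ≤ n := by exact_mod_cast hk
  have hβ : 0 ≤ β := hα.trans hαβ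
  exact ⟨by positivity, div_le_one_of_le₀ (by linarith) (by positivity)⟩

lemma bernsteinStancu_sub_eq_sum (n : ℕ) (α β : ℝ) (f : ℝ → ℝ) (x : ℝ) :
    bernsteinStancu n α β f x - f x
      = ∑ k ∈ range (n + 1), bernsteinBasis n k x * (f (((k : ℝ) + α) / (n + β)) - f x) := by
  simp only [bernsteinStancu, mul_sub, sum_sub_distrib, ← sum_mul, sum_bernsteinBasis, one_mul]

/-- Via `(n + β) ((k + α) / (n + β) - x) = (k - n x) + (α - β x)`. -/
lemma bernsteinStancu_sq_sub_mul_sq {n : ℕ} {β : ℝ} (hnβ : (n : ℝ) + β ≠ 0) (α x : ℝ) :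
    bernsteinStancu n α β (fun t => (t - x) ^ 2) x * ((n : ℝ) + β) ^ 2
      = n * x * (1 - x) + (α - β * x) ^ 2 := by
  rw [bernsteinStancu, sum_mul, ← sum_bernsteinBasis_mul_sq_sub_add]
  refine sum_congr rfl fun k _ => ?_
  field_simp
  ring

lemma natCast_mul_bernsteinStancu_sq_sub_le {n : ℕ} (hn : 1 ≤ n) {α β : ℝ} (hα : 0 ≤ α)
    (hαβ : α ≤ β) {x : ℝ} (hx : x ∈ Set.Icc (0 : ℝ) 1) :
    n * bernsteinStancu n α β (fun t => (t - x) ^ 2) x ≤ 1 / 4 + β ^ 2 := by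
  have hn' : (1 : ℝ) ≤ n := by exact_mod_cast hn
  have hnβ : (0 : ℝ) < n + β := by linarith
  have hvar : x * (1 - x) ≤ 1 / 4 := by nlinarith [sq_nonneg (2 * x - 1)]
  have hshift : (α - β * x) ^ 2 ≤ β ^ 2 := by
    apply sq_le_sq' <;> nlinarith [hx.1, hx.2]
  have hmoment := bernsteinStancu_sq_sub_mul_sq hnβ.ne' α x
  set S := bernsteinStancu n α β (fun t => (t - x) ^ 2) x
  rw [← mul_le_mul_iff_left₀ (pow_pos hnβ 2)]
  calc n * S * (n + β) ^ 2 = n * (n * (x * (1 - x)) + (α - β * x) ^ 2) := by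
        rw [mul_assoc, hmoment]; ring
    _ ≤ n * (n / 4 + β ^ 2) := by gcongr; nlinarith
    _ ≤ (1 / 4 + β ^ 2) * (n + β) ^ 2 := by
        have hβ : 0 ≤ β := hα.trans hαβ
        have hsq : (n : ℝ) ^ 2 ≤ (n + β) ^ 2 := by gcongr; linarith
        have hn_le_sq : (n : ℝ) ≤ n ^ 2 := by nlinarith
        nlinarith [mul_le_mul_of_nonneg_left hsq (sq_nonneg β),
          mul_le_mul_of_nonneg_right hn_le_sq (sq_nonneg β)]

lemma abs_sub_le_modulusOfContinuity {f : ℝ → ℝ} (hf : ContinuousOn f (Set.Icc 0 1))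
    {δ a b : ℝ} (ha : a ∈ Set.Icc (0 : ℝ) 1) (hb : b ∈ Set.Icc (0 : ℝ) 1) (hab : |a - b| ≤ δ) :
    |f a - f b| ≤ modulusOfContinuity f δ := by
  obtain ⟨C, hC⟩ := isCompact_Icc.exists_bound_of_continuousOn hf
  simp only [Real.norm_eq_abs] at hC
  refine le_csSup ⟨2 * C, ?_⟩ ⟨a, ha, b, hb, hab, rfl⟩
  rintro _ ⟨x₁, h₁, x₂, h₂, -, rfl⟩
  calc |f x₁ - f x₂| ≤ |f x₁| + |f x₂| := abs_sub _ _
    _ ≤ 2 * C := by linarith [hC x₁ h₁, hC x₂ h₂]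

lemma modulusOfContinuity_nonneg {f : ℝ → ℝ} (hf : ContinuousOn f (Set.Icc 0 1)) {δ : ℝ}
    (hδ : 0 ≤ δ) : 0 ≤ modulusOfContinuity f δ := by
  simpa using abs_sub_le_modulusOfContinuity hf (a := 0) (b := 0) (by simp) (by simp)
    (by simpa using hδ)

lemma abs_sub_le_natCast_mul_modulusOfContinuity {f : ℝ → ℝ}
    (hf : ContinuousOn f (Set.Icc 0 1)) {δ x : ℝ} (hx : x ∈ Set.Icc (0 : ℝ) 1) (m : ℕ)
    {t : ℝ} (ht : t ∈ Set.Icc (0 : ℝ) 1) (htx : |t - x| ≤ m * δ) :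
    |f t - f x| ≤ m * modulusOfContinuity f δ := by
  induction m generalizing t with
  | zero =>
    obtain rfl : t = x := by simpa [sub_eq_zero] using htx
    simp
  | succ m ih =>
    have hm : (0 : ℝ) < m + 1 := by positivity
    set s := x + ((m : ℝ) / (m + 1)) • (t - x)
    have hs : s ∈ Set.Icc (0 : ℝ) 1 :=
      (convex_Icc 0 1).add_smul_sub_mem hx ht
        ⟨by positivity, div_le_one_of_le₀ (by linarith) hm.le⟩
    have hsx : |s - x| ≤ m * δ := by
      have : s - x = (m / (m + 1)) * (t - x) := by simp [s]
      rw [this, abs_mul, abs_of_nonneg (by positivity), div_mul_eq_mul_div, div_le_iff₀ hm]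
      push_cast at htx
      nlinarith [Nat.cast_nonneg (α := ℝ) m]
    have hts : |t - s| ≤ δ := by
      have : t - s = (t - x) / (m + 1) := by simp only [s, smul_eq_mul]; field_simp; ring
      rw [this, abs_div, abs_of_pos hm, div_le_iff₀ hm]
      push_cast at htx
      linarith
    calc |f t - f x| ≤ |f t - f s| + |f s - f x| := abs_sub_le _ _ _
      _ ≤ modulusOfContinuity f δ + m * modulusOfContinuity f δ :=
        add_le_add (abs_sub_le_modulusOfContinuity hf ht hs hts) (ih hs hsx)
      _ = (m + 1 : ℕ) * modulusOfContinuity f δ := by push_cast; ring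

/-- Splitting `[x, t]` into `⌈|t - x| / δ⌉` steps of length at most `δ`. -/
lemma abs_sub_le_one_add_sq_mul_modulusOfContinuity {f : ℝ → ℝ}
    (hf : ContinuousOn f (Set.Icc 0 1)) {δ x t : ℝ} (hδ : 0 < δ)
    (hx : x ∈ Set.Icc (0 : ℝ) 1) (ht : t ∈ Set.Icc (0 : ℝ) 1) :
    |f t - f x| ≤ (1 + ((t - x) / δ) ^ 2) * modulusOfContinuity f δ := by
  set a := |t - x| / δ
  have ha : 0 ≤ a := by positivity
  have hsteps : |t - x| ≤ ⌈a⌉₊ * δ := by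
    rw [← div_le_iff₀ hδ]
    exact Nat.le_ceil a
  have hceil : (⌈a⌉₊ : ℝ) ≤ 1 + ((t - x) / δ) ^ 2 := by
    rw [← sq_abs, abs_div, abs_of_pos hδ]
    rcases le_or_gt a 1 with h | h
    · have : ⌈a⌉₊ ≤ 1 := Nat.ceil_le.2 (by simpa using h)
      have : (⌈a⌉₊ : ℝ) ≤ 1 := by exact_mod_cast this
      nlinarith
    · nlinarith [Nat.ceil_lt_add_one ha]
  calc |f t - f x| ≤ ⌈a⌉₊ * modulusOfContinuity f δ :=
        abs_sub_le_natCast_mul_modulusOfContinuity hf hx _ ht hsteps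
    _ ≤ (1 + ((t - x) / δ) ^ 2) * modulusOfContinuity f δ :=
        mul_le_mul_of_nonneg_right hceil (modulusOfContinuity_nonneg hf hδ.le)

lemma abs_bernsteinStancu_sub_le (n : ℕ) {α β : ℝ} (hα : 0 ≤ α) (hαβ : α ≤ β) {f : ℝ → ℝ}
    (hf : ContinuousOn f (Set.Icc 0 1)) {δ : ℝ} (hδ : 0 < δ) {x : ℝ}
    (hx : x ∈ Set.Icc (0 : ℝ) 1) :
    |bernsteinStancu n α β f x - f x|
      ≤ (1 + bernsteinStancu n α β (fun t => (t - x) ^ 2) x / δ ^ 2)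
        * modulusOfContinuity f δ := by
  set T : ℕ → ℝ := fun k => ((k : ℝ) + α) / (n + β)
  rw [bernsteinStancu_sub_eq_sum]
  calc |∑ k ∈ range (n + 1), bernsteinBasis n k x * (f (T k) - f x)|
      ≤ ∑ k ∈ range (n + 1), bernsteinBasis n k x * |f (T k) - f x| := by
        refine (abs_sum_le_sum_abs _ _).trans_eq (sum_congr rfl fun k _ => ?_)
        rw [abs_mul, abs_of_nonneg (bernsteinBasis_nonneg n k hx)]
    _ ≤ ∑ k ∈ range (n + 1),
          bernsteinBasis n k x * ((1 + ((T k - x) / δ) ^ 2) * modulusOfContinuity f δ) := by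
        refine sum_le_sum fun k hk => mul_le_mul_of_nonneg_left ?_ (bernsteinBasis_nonneg n k hx)
        exact abs_sub_le_one_add_sq_mul_modulusOfContinuity hf hδ hx
          (stancuNode_mem_Icc (Nat.lt_succ_iff.1 (mem_range.1 hk)) hα hαβ)
    _ = (1 + bernsteinStancu n α β (fun t => (t - x) ^ 2) x / δ ^ 2)
          * modulusOfContinuity f δ := by
        simp only [bernsteinStancu, mul_add, add_mul, sum_add_distrib, ← sum_mul,
          sum_bernsteinBasis, one_mul, sum_div, mul_div_assoc, T]
        rw [sum_mul]
        exact congrArg _ (sum_congr rfl fun k _ => by ring)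

theorem stancu_upper_estimate (α β : ℝ) (hα : 0 ≤ α) (hαβ : α ≤ β)
    (f : ℝ → ℝ) (hf : ContinuousOn f (Set.Icc 0 1)) :
    ∃ c > (0 : ℝ), ∀ n : ℕ, 1 ≤ n → ∀ x ∈ Set.Icc (0 : ℝ) 1,
      |bernsteinStancu n α β f x - f x|
        ≤ c * modulusOfContinuity f ((n : ℝ) ^ (-(1 / 2 : ℝ))) := by
  refine ⟨5 / 4 + β ^ 2, by positivity, fun n hn x hx => ?_⟩
  have hn0 : (0 : ℝ) < n := by exact_mod_cast hn
  set δ := (n : ℝ) ^ (-(1 / 2 : ℝ))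
  have hδ : 0 < δ := Real.rpow_pos_of_pos hn0 _
  have hδsq : δ ^ 2 = (n : ℝ)⁻¹ := by
    rw [← Real.rpow_natCast, ← Real.rpow_mul hn0.le]
    norm_num [Real.rpow_neg_one]
  calc |bernsteinStancu n α β f x - f x|
      ≤ (1 + n * bernsteinStancu n α β (fun t => (t - x) ^ 2) x) * modulusOfContinuity f δ := by
        simpa [hδsq, div_inv_eq_mul, mul_comm] using abs_bernsteinStancu_sub_le n hα hαβ hf hδ hx
    _ ≤ (5 / 4 + β ^ 2) * modulusOfContinuity f δ := by
        refine mul_le_mul_of_nonneg_right ?_ (modulusOfContinuity_nonneg hf hδ.le)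
        linarith [natCast_mul_bernsteinStancu_sq_sub_le hn hα hαβ hx]
end

section
/- Let α, β be real numbers with 0 ≤ α ≤ β. Then for every natural number n ≥ 1 and every x ∈ [0,1], the Bernstein-Stancu operator applied to the test function e₂(t) = t² satisfies B_n^{α,β}(e₂;x) = Σ_{k=0}^{n} (n choose k) x^k (1−x)^{n−k} · ((k+α)/(n+β))² = x² + (n x(1−x) + (α − βx)(2nx + βx + α))/(n + β)². -/
/-!
After expanding the square, the Stancu sum only involves the first three moments of the
binomial distribution: `∑ b_{n,k}(x) = 1`, `∑ k b_{n,k}(x) = n x` and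
`∑ k² b_{n,k}(x) = n x (1 - x) + (n x)²`, the last one coming from Mathlib's variance identity
for the Bernstein polynomials. Hence `∑ b_{n,k}(x) (k + α)² = n x (1 - x) + (n x + α)²`, and
dividing by `(n + β)²` is pure algebra since `n + β > 0`.
-/

open Finset Polynomial

namespace bernsteinPolynomial

variable {R : Type*} [CommRing R] (n : ℕ) (x : R)

theorem eval_eq (ν : ℕ) :
    (bernsteinPolynomial R n ν).eval x = n.choose ν * x ^ ν * (1 - x) ^ (n - ν) := by
  simp [bernsteinPolynomial]

theorem sum_eval : ∑ ν ∈ range (n + 1), (bernsteinPolynomial R n ν).eval x = 1 := by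
  simpa [eval_finsetSum] using congrArg (eval x) (bernsteinPolynomial.sum R n)

theorem sum_eval_mul_natCast :
    ∑ ν ∈ range (n + 1), (bernsteinPolynomial R n ν).eval x * ν = n * x := by
  simpa [eval_finsetSum, mul_comm] using congrArg (eval x) (bernsteinPolynomial.sum_smul R n)

theorem sum_eval_mul_natCast_sq :
    ∑ ν ∈ range (n + 1), (bernsteinPolynomial R n ν).eval x * (ν : R) ^ 2
      = n * x * (1 - x) + (n * x) ^ 2 := by
  have hvar := congrArg (eval x) (bernsteinPolynomial.variance R n)
  simp only [eval_finsetSum, eval_mul, eval_pow, eval_sub, eval_X, eval_natCast,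
    eval_one, nsmul_eq_mul] at hvar
  have hexpand : ∀ ν ∈ range (n + 1),
      ((n : R) * x - ν) ^ 2 * (bernsteinPolynomial R n ν).eval x
        = (bernsteinPolynomial R n ν).eval x * (ν : R) ^ 2
          - 2 * (n * x) * ((bernsteinPolynomial R n ν).eval x * ν)
          + (n * x) ^ 2 * (bernsteinPolynomial R n ν).eval x := fun _ _ => by ring
  rw [sum_congr rfl hexpand, sum_add_distrib, sum_sub_distrib, ← mul_sum, ← mul_sum,
    sum_eval, sum_eval_mul_natCast] at hvar
  linear_combination hvar

theorem sum_eval_mul_add_sq (a : R) :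
    ∑ ν ∈ range (n + 1), (bernsteinPolynomial R n ν).eval x * ((ν : R) + a) ^ 2
      = n * x * (1 - x) + (n * x + a) ^ 2 := by
  have hexpand : ∀ ν ∈ range (n + 1),
      (bernsteinPolynomial R n ν).eval x * ((ν : R) + a) ^ 2
        = (bernsteinPolynomial R n ν).eval x * (ν : R) ^ 2
          + 2 * a * ((bernsteinPolynomial R n ν).eval x * ν)
          + a ^ 2 * (bernsteinPolynomial R n ν).eval x := fun _ _ => by ring
  rw [sum_congr rfl hexpand, sum_add_distrib, sum_add_distrib, ← mul_sum, ← mul_sum,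
    sum_eval, sum_eval_mul_natCast, sum_eval_mul_natCast_sq]
  ring

end bernsteinPolynomial

theorem stancu_apply_e2_general (α β : ℝ) (hα : 0 ≤ α) (hαβ : α ≤ β)
    (n : ℕ) (hn : 1 ≤ n) (x : ℝ) :
    ∑ k ∈ Finset.range (n + 1),
        (n.choose k : ℝ) * x ^ k * (1 - x) ^ (n - k) * (((k : ℝ) + α) / ((n : ℝ) + β)) ^ 2
      = x ^ 2 + ((n : ℝ) * x * (1 - x) + (α - β * x) * (2 * (n : ℝ) * x + β * x + α))
          / ((n : ℝ) + β) ^ 2 := by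
  have hnβ : (n : ℝ) + β ≠ 0 := by
    have : (1 : ℝ) ≤ n := by exact_mod_cast hn
    linarith
  simp_rw [← bernsteinPolynomial.eval_eq, div_pow, ← mul_div_assoc, ← sum_div,
    bernsteinPolynomial.sum_eval_mul_add_sq]
  field_simp
  ring

theorem stancu_apply_e2 (α β : ℝ) (hα : 0 ≤ α) (hαβ : α ≤ β)
    (n : ℕ) (hn : 1 ≤ n) (x : ℝ) (hx : x ∈ Set.Icc (0 : ℝ) 1) :
    ∑ k ∈ Finset.range (n + 1),
        (n.choose k : ℝ) * x ^ k * (1 - x) ^ (n - k) * (((k : ℝ) + α) / ((n : ℝ) + β)) ^ 2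
      = x ^ 2 + ((n : ℝ) * x * (1 - x) + (α - β * x) * (2 * (n : ℝ) * x + β * x + α))
          / ((n : ℝ) + β) ^ 2 :=
  stancu_apply_e2_general α β hα hαβ n hn x
end
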